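/- (Deterministic core of Lemma A.1: Lipschitz continuity of the empirical covariance) Let x^1, …, x^M and y^1, …, y^M be two ensembles of vectors in ℝ^n with M ≥ 2, with empirical covariance matrices P_x and P_y and ensemble spreads V_x and V_y, respectively. Then ‖P_x − P_y‖_F ≤ 2 ( V_x^{1/2} + V_y^{1/2} ) · ( (1/(M−1)) Σ_{i=1}^M ‖x^i − y^i‖² )^{1/2}. -/

import Mathlib

open scoped BigOperators
open Matrix MeasureTheory

noncomputable section

/-- Squared Euclidean norm of a vector in ℝ^n. -/
def sqNorm {n : ℕ} (v : Fin n → ℝ) : ℝ := ∑ k, (v k) ^ 2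

/-- Euclidean norm of a vector in ℝ^n. -/
def evNorm {n : ℕ} (v : Fin n → ℝ) : ℝ := Real.sqrt (sqNorm v)

/-- Euclidean inner product on ℝ^n. -/
def eip {n : ℕ} (v w : Fin n → ℝ) : ℝ := ∑ k, v k * w k

/-- Empirical mean of an ensemble of M vectors in ℝ^n. -/
def empMean (M n : ℕ) (x : Fin M → Fin n → ℝ) : Fin n → ℝ := (M : ℝ)⁻¹ • ∑ i, x i

/-- Empirical covariance matrix of an ensemble of M vectors in ℝ^n. -/
def empCov (M n : ℕ) (x : Fin M → Fin n → ℝ) : Matrix (Fin n) (Fin n) ℝ :=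
  Matrix.of fun k l =>
    ((M : ℝ) - 1)⁻¹ * ∑ i, (x i k - empMean M n x k) * (x i l - empMean M n x l)

/-- Ensemble spread (l²-norm of ensemble deviations from the mean). -/
def spread (M n : ℕ) (x : Fin M → Fin n → ℝ) : ℝ :=
  ((M : ℝ) - 1)⁻¹ * ∑ i, sqNorm (x i - empMean M n x)

/-- Frobenius norm of a matrix. -/
def frobNorm {m n : ℕ} (A : Matrix (Fin m) (Fin n) ℝ) : ℝ :=
  Real.sqrt (∑ i, ∑ j, (A i j) ^ 2)

/- ------------------ auxiliary material ------------------ -/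

lemma sqNorm_nonneg {n : ℕ} (v : Fin n → ℝ) : 0 ≤ sqNorm v :=
  Finset.sum_nonneg fun _ _ => sq_nonneg _

/-- Linear embedding of matrices into Euclidean space. -/
def matToE {m n : ℕ} : Matrix (Fin m) (Fin n) ℝ →ₗ[ℝ] EuclideanSpace ℝ (Fin m × Fin n) where
  toFun A := WithLp.toLp 2 (fun p : Fin m × Fin n => A p.1 p.2)
  map_add' _ _ := rfl
  map_smul' _ _ := rfl

lemma frobNorm_eq_norm {m n : ℕ} (A : Matrix (Fin m) (Fin n) ℝ) :
    frobNorm A = ‖matToE A‖ := by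
  rw [EuclideanSpace.norm_eq]
  unfold frobNorm
  congr 1
  rw [Fintype.sum_prod_type]
  simp [matToE, LinearMap.coe_mk, AddHom.coe_mk, Real.norm_eq_abs, sq_abs]
  rfl

lemma frobNorm_smul {m n : ℕ} (c : ℝ) (hc : 0 ≤ c) (A : Matrix (Fin m) (Fin n) ℝ) :
    frobNorm (c • A) = c * frobNorm A := by
  rw [frobNorm_eq_norm, frobNorm_eq_norm, LinearMap.map_smul, norm_smul, Real.norm_eq_abs,
    abs_of_nonneg hc]

lemma frobNorm_sum_le {m n N : ℕ} (f : Fin N → Matrix (Fin m) (Fin n) ℝ) :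
    frobNorm (∑ i, f i) ≤ ∑ i, frobNorm (f i) := by
  rw [frobNorm_eq_norm, map_sum]
  refine (norm_sum_le _ _).trans ?_
  exact le_of_eq (Finset.sum_congr rfl fun i _ => (frobNorm_eq_norm (f i)).symm)

/-- Rank-one (outer product) matrix. -/
def outer {n : ℕ} (u v : Fin n → ℝ) : Matrix (Fin n) (Fin n) ℝ :=
  Matrix.of fun k l => u k * v l

lemma frobNorm_outer {n : ℕ} (u v : Fin n → ℝ) :
    frobNorm (outer u v) = evNorm u * evNorm v := by
  unfold frobNorm evNorm
  rw [← Real.sqrt_mul (sqNorm_nonneg u)]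
  congr 1
  unfold sqNorm
  rw [Finset.sum_mul_sum]
  exact Finset.sum_congr rfl fun k _ => Finset.sum_congr rfl fun l _ => by
    simp [outer, mul_pow]

lemma frobNorm_add_le {m n : ℕ} (A B : Matrix (Fin m) (Fin n) ℝ) :
    frobNorm (A + B) ≤ frobNorm A + frobNorm B := by
  rw [frobNorm_eq_norm, frobNorm_eq_norm, frobNorm_eq_norm, map_add]
  exact norm_add_le _ _

/-- The mean minimizes the sum of squared deviations (weak form). -/
lemma sum_sqNorm_sub_mean_le {M n : ℕ} (hM : 0 < M) (d : Fin M → Fin n → ℝ) :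
    ∑ i, sqNorm (d i - empMean M n d) ≤ ∑ i, sqNorm (d i) := by
  unfold sqNorm
  have L : ∑ i, ∑ k, ((d i - empMean M n d) k) ^ 2
      = ∑ k, ∑ i, ((d i - empMean M n d) k) ^ 2 := Finset.sum_comm
  have R : (∑ i, ∑ k, (d i k) ^ 2 : ℝ) = ∑ k, ∑ i, (d i k) ^ 2 := Finset.sum_comm
  rw [L, R]
  apply Finset.sum_le_sum
  intro k _
  set s : ℝ := ∑ i, d i k with hs
  have hMne : ((M : ℝ)) ≠ 0 := Nat.cast_ne_zero.mpr hM.ne'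
  have hmk : empMean M n d k = (M : ℝ)⁻¹ * s := by
    simp [empMean, hs, Finset.sum_apply]
  set m : ℝ := (M : ℝ)⁻¹ * s with hm
  have hms : (M : ℝ) * m = s := by
    rw [hm, ← mul_assoc, mul_inv_cancel₀ hMne, one_mul]
  have expand : ∑ i, ((d i - empMean M n d) k) ^ 2
      = (∑ i, (d i k) ^ 2) - 2 * m * s + (M : ℝ) * m ^ 2 := by
    have h1 : ∀ i : Fin M, ((d i - empMean M n d) k) ^ 2
        = (d i k) ^ 2 - 2 * m * (d i k) + m ^ 2 := by
      intro i
      rw [Pi.sub_apply, hmk]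
      ring
    rw [Finset.sum_congr rfl fun i _ => h1 i, Finset.sum_add_distrib,
      Finset.sum_sub_distrib, ← Finset.mul_sum, ← hs]
    simp [Finset.card_univ, mul_comm]
  rw [expand]
  have h2 : 2 * m * s = 2 * ((M : ℝ) * m ^ 2) := by rw [← hms]; ring
  have h3 : 0 ≤ (M : ℝ) * m ^ 2 := mul_nonneg (Nat.cast_nonneg M) (sq_nonneg m)
  linarith

/-- Deterministic core of Lemma A.1: Lipschitz continuity of the empirical
covariance with respect to the ensemble. -/
theorem empCov_lipschitz {n M : ℕ} (hM : 2 ≤ M)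
    (x y : Fin M → Fin n → ℝ) :
    frobNorm (empCov M n x - empCov M n y) ≤
      2 * (Real.sqrt (spread M n x) + Real.sqrt (spread M n y)) *
        Real.sqrt (((M : ℝ) - 1)⁻¹ * ∑ i, sqNorm (x i - y i)) := by
  set c : ℝ := ((M : ℝ) - 1)⁻¹ with hc_def
  have hM2 : (2 : ℝ) ≤ (M : ℝ) := by exact_mod_cast hM
  have hc : 0 ≤ c := by
    rw [hc_def]
    apply inv_nonneg.mpr; linarith
  set a : Fin M → Fin n → ℝ := fun i => x i - empMean M n x with ha
  set b : Fin M → Fin n → ℝ := fun i => y i - empMean M n y with hb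
  set e : Fin M → Fin n → ℝ := fun i => a i - b i with he
  set S : Matrix (Fin n) (Fin n) ℝ := ∑ i, (outer (a i) (e i) + outer (e i) (b i)) with hS
  -- Step A: rewrite the covariance difference
  have hcov : empCov M n x - empCov M n y = c • S := by
    ext k l
    simp only [hS, Matrix.sub_apply, Matrix.smul_apply, Matrix.sum_apply, Matrix.add_apply,
      empCov, Matrix.of_apply, smul_eq_mul, outer]
    rw [← mul_sub, ← Finset.sum_sub_distrib]
    congr 1
    refine Finset.sum_congr rfl fun i _ => ?_
    simp only [ha, hb, he, Pi.sub_apply]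
    ring
  set Sa : ℝ := ∑ i, sqNorm (a i) with hSa
  set Sb : ℝ := ∑ i, sqNorm (b i) with hSb
  set Se : ℝ := ∑ i, sqNorm (e i) with hSe
  set Sd : ℝ := ∑ i, sqNorm (x i - y i) with hSd
  -- Step B: triangle + rank-one norms
  have hB : frobNorm (empCov M n x - empCov M n y)
      ≤ c * ∑ i, (evNorm (a i) * evNorm (e i) + evNorm (e i) * evNorm (b i)) := by
    rw [hcov, frobNorm_smul c hc]
    apply mul_le_mul_of_nonneg_left _ hc
    refine (frobNorm_sum_le _).trans ?_
    apply Finset.sum_le_sum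
    intro i _
    refine (frobNorm_add_le _ _).trans ?_
    rw [frobNorm_outer, frobNorm_outer]
  -- Step C: Cauchy–Schwarz
  have hCSa : ∑ i, evNorm (a i) * evNorm (e i) ≤ Real.sqrt Sa * Real.sqrt Se := by
    simpa [evNorm, hSa, hSe] using
      Real.sum_sqrt_mul_sqrt_le Finset.univ (f := fun i => sqNorm (a i))
        (g := fun i => sqNorm (e i)) (fun i => sqNorm_nonneg _) (fun i => sqNorm_nonneg _)
  have hCSb : ∑ i, evNorm (e i) * evNorm (b i) ≤ Real.sqrt Se * Real.sqrt Sb := by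
    simpa [evNorm, hSb, hSe] using
      Real.sum_sqrt_mul_sqrt_le Finset.univ (f := fun i => sqNorm (e i))
        (g := fun i => sqNorm (b i)) (fun i => sqNorm_nonneg _) (fun i => sqNorm_nonneg _)
  have hC : frobNorm (empCov M n x - empCov M n y)
      ≤ c * (Real.sqrt Sa * Real.sqrt Se + Real.sqrt Se * Real.sqrt Sb) := by
    refine hB.trans ?_
    apply mul_le_mul_of_nonneg_left _ hc
    rw [Finset.sum_add_distrib]
    exact add_le_add hCSa hCSb
  -- Step D: pull c inside square roots
  have halg : c * (Real.sqrt Sa * Real.sqrt Se + Real.sqrt Se * Real.sqrt Sb)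
      = (Real.sqrt (c * Sa) + Real.sqrt (c * Sb)) * Real.sqrt (c * Se) := by
    have hr : Real.sqrt c * Real.sqrt c = c := Real.mul_self_sqrt hc
    rw [Real.sqrt_mul hc, Real.sqrt_mul hc, Real.sqrt_mul hc]
    linear_combination (-(Real.sqrt Sa * Real.sqrt Se) - Real.sqrt Se * Real.sqrt Sb) * hr
  -- Step E: Se ≤ Sd
  have hMean : empMean M n x - empMean M n y = empMean M n (fun i => x i - y i) := by
    unfold empMean
    rw [← smul_sub, ← Finset.sum_sub_distrib]
  have hSeSd : Se ≤ Sd := by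
    rw [hSe, hSd]
    have he2 : ∀ i, e i = (fun j => x j - y j) i - empMean M n (fun j => x j - y j) := by
      intro i
      rw [he, ha, hb, ← hMean]
      ext k
      simp only [Pi.sub_apply]
      ring
    rw [Finset.sum_congr rfl fun i _ => by rw [he2 i]]
    exact sum_sqNorm_sub_mean_le (by omega) _
  have hsx : spread M n x = c * Sa := rfl
  have hsy : spread M n y = c * Sb := rfl
  have hfinal : frobNorm (empCov M n x - empCov M n y)
      ≤ (Real.sqrt (spread M n x) + Real.sqrt (spread M n y)) * Real.sqrt (c * Sd) := by
    refine hC.trans ?_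
    rw [halg, hsx, hsy]
    apply mul_le_mul_of_nonneg_left _ (by positivity)
    exact Real.sqrt_le_sqrt (mul_le_mul_of_nonneg_left hSeSd hc)
  refine hfinal.trans ?_
  have h0 : 0 ≤ (Real.sqrt (spread M n x) + Real.sqrt (spread M n y)) * Real.sqrt (c * Sd) := by
    positivity
  linarith

end
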